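/- arXiv:1905.10590 — 5 statements merged into one kernel-verified Lean document; each statement's English description precedes it below -/
import Mathlib

section
/- For t ≤ u, the random variables C_t and X_u on the uniform space {H,T}^m are uncorrelated: E[C_t X_u] = E[C_t]·E[X_u]. -/
open Finset

/-- Number of heads among the first `t` flips of `ω ∈ {H,T}^m` (heads = `true`). -/
def X (m t : ℕ) (ω : Fin m → Bool) : ℕ :=
  (Finset.univ.filter (fun i : Fin m => (i : ℕ) < t ∧ ω i = true)).card

/-- `C t = X (t-1)` if flip `t` (1-indexed) is tails, and `0` otherwise. -/
def C (m t : ℕ) (ω : Fin m → Bool) : ℕ :=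
  if h : t - 1 < m then (if ω ⟨t - 1, h⟩ = false then X m (t - 1) ω else 0) else 0

/-- Number of tails. -/
def Y (m : ℕ) (ω : Fin m → Bool) : ℕ := m - X m m ω

/-- Size of the random partition: `N = Y + ∑_{t=1}^m C_t`. -/
def N (m : ℕ) (ω : Fin m → Bool) : ℕ := Y m ω + ∑ t ∈ Finset.Icc 1 m, C m t ω

/-- Expectation with respect to the uniform distribution on `{H,T}^m`. -/
noncomputable def expec (m : ℕ) (f : (Fin m → Bool) → ℝ) : ℝ :=
  (∑ ω : Fin m → Bool, f ω) / 2 ^ m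

/-- Variance with respect to the uniform distribution on `{H,T}^m`. -/
noncomputable def variance (m : ℕ) (f : (Fin m → Bool) → ℝ) : ℝ :=
  expec m (fun ω => (f ω - expec m f) ^ 2)

/-
Write `X_u = ∑_{j ≤ u} h_j` and `C_t = τ ∑_{i < t} h_i`, where `h_j` indicates heads at flip `j`
and `τ` tails at flip `t`. A cylinder indicator fixing `k` coordinates has expectation `2⁻ᵏ`, so
`E[τ h_i h_j]` is `1/8` except at `j = i` (`1/4`) and at `j = t` (`0`). Since `i < t ≤ u`, both
exceptional indices occur in the sum over `j ≤ u` and their deviations cancel, giving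
`E[C_t X_u] = (t-1) u / 8 = E[C_t] E[X_u]`.
-/

section

variable {m : ℕ}

lemma expec_sum {ι : Type*} (s : Finset ι) (f : ι → (Fin m → Bool) → ℝ) :
    expec m (fun ω => ∑ i ∈ s, f i ω) = ∑ i ∈ s, expec m (f i) := by
  simp only [expec, ← sum_div]
  rw [sum_comm]

lemma expec_prod_apply (f : Fin m → Bool → ℝ) :
    expec m (fun ω => ∏ k, f k (ω k)) = ∏ k, (f k true + f k false) / 2 := by
  rw [expec, ← Fintype.prod_sum, prod_div_distrib, prod_const, card_univ, Fintype.card_fin]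
  simp only [Fintype.sum_bool]

lemma expec_prod_ite_eq (S : Finset (Fin m)) (v : Fin m → Bool) :
    expec m (fun ω => ∏ k ∈ S, if ω k = v k then (1 : ℝ) else 0) = 2⁻¹ ^ #S := by
  have h := expec_prod_apply fun k b => if k ∈ S then (if b = v k then (1 : ℝ) else 0) else 1
  have avg (k : Fin m) : ((if k ∈ S then (if true = v k then (1 : ℝ) else 0) else 1) +
      (if k ∈ S then (if false = v k then (1 : ℝ) else 0) else 1)) / 2 =
      if k ∈ S then 2⁻¹ else 1 := by
    by_cases hk : k ∈ S <;> cases v k <;> norm_num [hk]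
  simpa only [avg, prod_ite_mem, univ_inter, prod_const] using h

lemma expec_ite_eq (a : Fin m) (x : Bool) :
    expec m (fun ω => if ω a = x then (1 : ℝ) else 0) = 1 / 2 := by
  simpa using expec_prod_ite_eq {a} fun _ => x

lemma expec_ite_eq_mul_ite_eq {a b : Fin m} (hab : a ≠ b) (x y : Bool) :
    expec m (fun ω => (if ω a = x then (1 : ℝ) else 0) * (if ω b = y then 1 else 0)) =
      1 / 4 := by
  have h := expec_prod_ite_eq {a, b} fun k => if k = a then x else y
  rw [card_pair hab] at h
  norm_num [prod_pair hab, hab.symm] at h ⊢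
  exact h

lemma expec_ite_eq_mul_ite_eq_mul_ite_eq {a b c : Fin m} (hab : a ≠ b) (hac : a ≠ c)
    (hbc : b ≠ c) (x y z : Bool) :
    expec m (fun ω => (if ω a = x then (1 : ℝ) else 0) * (if ω b = y then 1 else 0) *
      (if ω c = z then 1 else 0)) = 1 / 8 := by
  have h := expec_prod_ite_eq {a, b, c} fun k => if k = a then x else if k = b then y else z
  rw [card_insert_of_notMem (by simp [hab, hac]), card_pair hbc] at h
  simp only [prod_insert (show a ∉ ({b, c} : Finset _) by simp [hab, hac]), prod_pair hbc] at h
  norm_num [hab.symm, hac.symm, hbc.symm, mul_assoc] at h ⊢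
  exact h

lemma X_eq_sum (u : ℕ) (ω : Fin m → Bool) :
    (X m u ω : ℝ) = ∑ j ∈ {j : Fin m | (j : ℕ) < u}, if ω j = true then 1 else 0 := by
  rw [sum_boole, filter_filter]
  rfl

lemma C_succ_eq (s : Fin m) (ω : Fin m → Bool) :
    (C m (s + 1) ω : ℝ) = (if ω s = false then 1 else 0) * X m s ω := by
  simp only [C, Nat.add_sub_cancel, dif_pos s.isLt]
  split_ifs <;> simp

lemma expec_X (u : ℕ) : expec m (fun ω => (X m u ω : ℝ)) = min m u / 2 := by
  simp only [X_eq_sum, expec_sum, expec_ite_eq, sum_const, Fin.card_filter_val_lt, nsmul_eq_mul]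
  push_cast
  ring

lemma expec_C (s : Fin m) : expec m (fun ω => (C m (s + 1) ω : ℝ)) = s / 4 := by
  simp only [C_succ_eq, X_eq_sum, mul_sum, expec_sum]
  rw [sum_congr rfl fun i hi => expec_ite_eq_mul_ite_eq
      (by rintro rfl; simp at hi) false true,
    sum_const, Fin.card_filter_val_lt, min_eq_right s.isLt.le, nsmul_eq_mul]
  ring

lemma expec_tails_mul_heads_mul_heads {s i : Fin m} (his : i ≠ s) (j : Fin m) :
    expec m (fun ω => (if ω s = false then (1 : ℝ) else 0) * (if ω i = true then 1 else 0) *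
      (if ω j = true then 1 else 0)) =
      1 / 8 + (if j = i then 1 / 8 else 0) - (if j = s then 1 / 8 else 0) := by
  by_cases hjs : j = s
  · subst hjs
    have hvanish : ∀ ω : Fin m → Bool, (if ω j = false then (1 : ℝ) else 0) *
        (if ω i = true then 1 else 0) * (if ω j = true then 1 else 0) = 0 := by
      intro ω; cases ω j <;> simp
    simp only [hvanish, expec, sum_const_zero, zero_div, if_neg his.symm, if_true]
    ring
  by_cases hji : j = i
  · subst hji
    have hidem : ∀ ω : Fin m → Bool, (if ω s = false then (1 : ℝ) else 0) *
        (if ω j = true then 1 else 0) * (if ω j = true then 1 else 0) =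
        (if ω s = false then (1 : ℝ) else 0) * (if ω j = true then 1 else 0) := by
      intro ω; cases ω j <;> simp
    simp only [hidem, expec_ite_eq_mul_ite_eq his.symm, if_neg hjs]
    norm_num
  · rw [expec_ite_eq_mul_ite_eq_mul_ite_eq his.symm (Ne.symm hjs) (Ne.symm hji), if_neg hji,
      if_neg hjs]
    ring

lemma expec_C_mul_X (s : Fin m) {u : ℕ} (hsu : (s : ℕ) < u) :
    expec m (fun ω => (C m (s + 1) ω : ℝ) * X m u ω) = s * min m u / 8 := by
  set J : Finset (Fin m) := {j : Fin m | (j : ℕ) < u}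
  have hsJ : s ∈ J := by simpa [J] using hsu
  have row : ∀ i ∈ ({i : Fin m | (i : ℕ) < s} : Finset _), ∑ j ∈ J, expec m (fun ω =>
      (if ω s = false then (1 : ℝ) else 0) * (if ω i = true then 1 else 0) *
        (if ω j = true then 1 else 0)) = min m u / 8 := by
    intro i hi
    have his : (i : ℕ) < s := by simpa using hi
    have hiJ : i ∈ J := by simpa [J] using his.trans hsu
    simp only [expec_tails_mul_heads_mul_heads (Fin.ne_of_lt his), sum_sub_distrib,
      sum_add_distrib, sum_ite_eq', if_pos hiJ, if_pos hsJ, sum_const, J,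
      Fin.card_filter_val_lt, nsmul_eq_mul]
    push_cast
    ring
  simp only [C_succ_eq, X_eq_sum, mul_sum, sum_mul, expec_sum]
  rw [sum_comm, sum_congr rfl row, sum_const, Fin.card_filter_val_lt, min_eq_right s.isLt.le,
    nsmul_eq_mul]
  ring

end

/-- For `t ≤ u`, `C_t` and `X_u` are uncorrelated. -/
theorem C_X_uncorrelated (m t u : ℕ) (h1 : 1 ≤ t) (htu : t ≤ u) (h2 : u ≤ m) :
    expec m (fun ω => (C m t ω : ℝ) * (X m u ω : ℝ)) =
      expec m (fun ω => (C m t ω : ℝ)) * expec m (fun ω => (X m u ω : ℝ)) := by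
  obtain ⟨s, rfl⟩ : ∃ s : Fin m, t = s + 1 := ⟨⟨t - 1, by omega⟩, (Nat.sub_add_cancel h1).symm⟩
  rw [expec_C_mul_X s (by omega), expec_C, expec_X]
  ring
end

section
/- For every t, C_t and Y are uncorrelated on the uniform space {H,T}^m: E[C_t Y] = E[C_t]·E[Y], where Y = m − X_m is the number of tails. -/
open Finset

/-- head indicator -/
def hInd (b : Bool) : ℝ := if b then 1 else 0

/-- tail indicator -/
def zInd (b : Bool) : ℝ := if b then 0 else 1

lemma key_factor (m : ℕ) (s : Finset (Fin m)) (f : Fin m → Bool → ℝ) :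
    (2 : ℝ) ^ s.card * ∑ ω : Fin m → Bool, ∏ l ∈ s, f l (ω l)
      = 2 ^ m * ∏ l ∈ s, (f l true + f l false) := by
  classical
  set F : Fin m → Bool → ℝ := fun l b => if l ∈ s then f l b else 1 with hF
  have h1 : ∀ ω : Fin m → Bool, ∏ l ∈ s, f l (ω l) = ∏ l : Fin m, F l (ω l) := by
    intro ω
    rw [← Finset.prod_mul_prod_compl s (fun l => F l (ω l))]
    have : ∏ l ∈ sᶜ, F l (ω l) = 1 := by
      apply Finset.prod_eq_one
      intro x hx
      simp [hF, (Finset.mem_compl.mp hx)]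
    rw [this, mul_one]
    apply Finset.prod_congr rfl
    intro x hx
    simp [hF, hx]
  have h2 : ∑ ω : Fin m → Bool, ∏ l : Fin m, F l (ω l)
      = ∏ l : Fin m, (F l true + F l false) := by
    calc ∑ ω : Fin m → Bool, ∏ l : Fin m, F l (ω l)
        = ∑ p ∈ Fintype.piFinset (fun _ : Fin m => (Finset.univ : Finset Bool)),
            ∏ l : Fin m, F l (p l) := by rw [Fintype.piFinset_univ]
      _ = ∏ l : Fin m, ∑ b ∈ (Finset.univ : Finset Bool), F l b :=
            (Finset.prod_univ_sum _ _).symm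
      _ = ∏ l : Fin m, (F l true + F l false) := by simp
  have h3 : ∏ l : Fin m, (F l true + F l false)
      = (∏ l ∈ s, (f l true + f l false)) * 2 ^ sᶜ.card := by
    rw [← Finset.prod_mul_prod_compl s (fun l => F l true + F l false)]
    congr 1
    · apply Finset.prod_congr rfl; intro x hx; simp [hF, hx]
    · have : ∀ x ∈ sᶜ, F x true + F x false = 2 := by
        intro x hx
        simp only [hF, if_neg (Finset.mem_compl.mp hx)]
        norm_num
      rw [Finset.prod_congr rfl this, Finset.prod_const]
  have hsimp : ∀ ω : Fin m → Bool, (fun ω => ∏ l ∈ s, f l (ω l)) ω = ∏ l : Fin m, F l (ω l) := h1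
  calc (2 : ℝ) ^ s.card * ∑ ω : Fin m → Bool, ∏ l ∈ s, f l (ω l)
      = (2:ℝ) ^ s.card * ∑ ω : Fin m → Bool, ∏ l : Fin m, F l (ω l) := by
        rw [Finset.sum_congr rfl fun ω _ => h1 ω]
    _ = (2:ℝ) ^ s.card * ((∏ l ∈ s, (f l true + f l false)) * 2 ^ sᶜ.card) := by rw [h2, h3]
    _ = 2 ^ (s.card + sᶜ.card) * ∏ l ∈ s, (f l true + f l false) := by ring
    _ = 2 ^ m * ∏ l ∈ s, (f l true + f l false) := by
        rw [Finset.card_add_card_compl]; simp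

lemma hz_sum : hInd true + hInd false = 1 := by simp [hInd]
lemma zz_sum : zInd true + zInd false = 1 := by simp [zInd]

-- single coordinate
lemma single_sum (m : ℕ) (j : Fin m) :
    (2:ℝ) * ∑ ω : Fin m → Bool, zInd (ω j) = 2 ^ m := by
  have := key_factor m {j} (fun _ b => zInd b)
  simpa [zInd] using this

-- pair, distinct coordinates
lemma pair_sum (m : ℕ) (i k : Fin m) (hik : i ≠ k) :
    (4:ℝ) * ∑ ω : Fin m → Bool, zInd (ω k) * hInd (ω i) = 2 ^ m := by
  have := key_factor m {k, i} (fun l b => if l = i then hInd b else zInd b)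
  simp only [Finset.card_pair (Ne.symm hik), Finset.prod_pair (Ne.symm hik),
    if_neg (Ne.symm hik), if_pos rfl, if_true] at this
  rw [show ((2:ℝ)^2) = 4 by norm_num, hz_sum, zz_sum] at this
  rw [this]; ring

-- triple, distinct coordinates
lemma triple_sum (m : ℕ) (i k j : Fin m) (hik : i ≠ k) (hji : j ≠ i) (hjk : j ≠ k) :
    (8:ℝ) * ∑ ω : Fin m → Bool, zInd (ω k) * hInd (ω i) * zInd (ω j) = 2 ^ m := by
  have hk : (k : Fin m) ∉ ({i, j} : Finset (Fin m)) := by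
    simp [Ne.symm hik, Ne.symm hjk, eq_comm]
  have := key_factor m {k, i, j} (fun l b => if l = i then hInd b else zInd b)
  have hcard : ({k, i, j} : Finset (Fin m)).card = 3 := by
    rw [Finset.card_insert_of_notMem hk, Finset.card_pair (Ne.symm hji)]
  simp only [hcard, Finset.prod_insert hk, Finset.prod_pair (Ne.symm hji),
    if_neg (Ne.symm hik), if_neg hji, if_pos rfl, if_true, ← mul_assoc] at this
  rw [show ((2:ℝ)^3) = 8 by norm_num, hz_sum, zz_sum] at this
  rw [this]; ring

lemma Xcast (m k : ℕ) (ω : Fin m → Bool) :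
    (X m k ω : ℝ) = ∑ i ∈ Finset.univ.filter (fun i : Fin m => (i:ℕ) < k), hInd (ω i) := by
  rw [X, Finset.card_filter, Finset.sum_filter]
  push_cast
  apply Finset.sum_congr rfl
  intro i _
  by_cases h : (i:ℕ) < k <;> by_cases hb : ω i = true <;> simp [h, hb, hInd]

lemma Ycast (m : ℕ) (ω : Fin m → Bool) :
    (Y m ω : ℝ) = ∑ j : Fin m, zInd (ω j) := by
  classical
  have hX : X m m ω = (Finset.univ.filter (fun i : Fin m => ω i = true)).card := by
    rw [X]; congr 1
    apply Finset.filter_congr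
    intro i _
    simp [i.isLt]
  have hsplit : (Finset.univ.filter (fun i : Fin m => ω i = true)).card
      + (Finset.univ.filter (fun i : Fin m => ¬ (ω i = true))).card = m := by
    rw [Finset.card_filter_add_card_filter_not]
    simp
  have hY : Y m ω = (Finset.univ.filter (fun i : Fin m => ¬ (ω i = true))).card := by
    rw [Y, hX]; omega
  rw [hY, Finset.card_filter]
  push_cast
  apply Finset.sum_congr rfl
  intro j _
  cases hb : ω j <;> simp [hb, zInd]

lemma Ccast (m t : ℕ) (hk : t - 1 < m) (ω : Fin m → Bool) :
    (C m t ω : ℝ) = ∑ i ∈ Finset.univ.filter (fun i : Fin m => (i:ℕ) < t - 1),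
      zInd (ω ⟨t-1, hk⟩) * hInd (ω i) := by
  rw [C, dif_pos hk]
  cases hb : ω ⟨t-1, hk⟩
  · rw [if_pos rfl, Xcast]
    simp [zInd, hb]
  · rw [if_neg (by simp)]
    simp [zInd, hb]

/-- `C_t` and `Y` are uncorrelated. -/
theorem C_Y_uncorrelated (m t : ℕ) (h1 : 1 ≤ t) (h2 : t ≤ m) :
    expec m (fun ω => (C m t ω : ℝ) * (Y m ω : ℝ)) =
      expec m (fun ω => (C m t ω : ℝ)) * expec m (fun ω => (Y m ω : ℝ)) := by
  classical
  have hk : t - 1 < m := by omega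
  set k : Fin m := ⟨t-1, hk⟩ with hkdef
  set A := Finset.univ.filter (fun i : Fin m => (i:ℕ) < t - 1) with hA
  have hAk : ∀ i ∈ A, i ≠ k := by
    intro i hi hik
    rw [hA, Finset.mem_filter] at hi
    rw [hik] at hi
    simp [hkdef] at hi
  have hAcard : A.card = t - 1 := by
    have : A = Finset.Iio k := by
      ext i
      simp [hA, Finset.mem_Iio, Fin.lt_def, hkdef]
    rw [this, Fin.card_Iio]
  have hC : ∀ ω : Fin m → Bool, (C m t ω : ℝ) = ∑ i ∈ A, zInd (ω k) * hInd (ω i) :=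
    fun ω => Ccast m t hk ω
  have hYc : ∀ ω : Fin m → Bool, (Y m ω : ℝ) = ∑ j : Fin m, zInd (ω j) :=
    fun ω => Ycast m ω
  simp only [expec]
  set T1 := ∑ ω : Fin m → Bool, (C m t ω : ℝ) * (Y m ω : ℝ) with hT1
  set T2 := ∑ ω : Fin m → Bool, (C m t ω : ℝ) with hT2
  set T3 := ∑ ω : Fin m → Bool, (Y m ω : ℝ) with hT3
  set W : Fin m → Fin m → ℝ :=
    fun i j => ∑ ω : Fin m → Bool, zInd (ω k) * hInd (ω i) * zInd (ω j) with hW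
  -- T2
  have e2 : (4:ℝ) * T2 = ((t-1 : ℕ) : ℝ) * 2^m := by
    calc (4:ℝ) * T2 = ∑ i ∈ A, (4:ℝ) * ∑ ω : Fin m → Bool, zInd (ω k) * hInd (ω i) := by
          rw [hT2, Finset.sum_congr rfl (fun ω _ => hC ω), Finset.sum_comm, Finset.mul_sum]
      _ = ∑ i ∈ A, (2:ℝ)^m := Finset.sum_congr rfl fun i hi => pair_sum m i k (hAk i hi)
      _ = ((t-1 : ℕ) : ℝ) * 2^m := by
          rw [Finset.sum_const, hAcard, nsmul_eq_mul]
  -- T3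
  have e3 : (2:ℝ) * T3 = (m : ℝ) * 2^m := by
    calc (2:ℝ) * T3 = ∑ j : Fin m, (2:ℝ) * ∑ ω : Fin m → Bool, zInd (ω j) := by
          rw [hT3, Finset.sum_congr rfl (fun ω _ => hYc ω), Finset.sum_comm, Finset.mul_sum]
      _ = ∑ _j : Fin m, (2:ℝ)^m := Finset.sum_congr rfl fun j _ => single_sum m j
      _ = (m : ℝ) * 2^m := by
          rw [Finset.sum_const, nsmul_eq_mul]
          simp
  -- T1
  have hT1' : T1 = ∑ i ∈ A, ∑ j : Fin m, W i j := by
    rw [hT1, Finset.sum_congr rfl (fun ω _ => by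
      rw [hC ω, hYc ω, Finset.sum_mul_sum])]
    rw [Finset.sum_comm]
    apply Finset.sum_congr rfl
    intro i _
    rw [Finset.sum_comm]
  have hinner : ∀ i ∈ A, (8:ℝ) * ∑ j : Fin m, W i j = (m : ℝ) * 2^m := by
    intro i hi
    have hik := hAk i hi
    have hival : (i:ℕ) < t - 1 := by
      rw [hA, Finset.mem_filter] at hi; exact hi.2
    have hm2 : 2 ≤ m := by omega
    have hsplit : ∑ j : Fin m, W i j
        = W i k + (W i i + ∑ j ∈ (Finset.univ.erase k).erase i, W i j) := by
      rw [← Finset.add_sum_erase _ _ (Finset.mem_univ k),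
          ← Finset.add_sum_erase _ _ (Finset.mem_erase.mpr ⟨hik, Finset.mem_univ i⟩)]
    have h8k : (8:ℝ) * W i k = 2 * 2^m := by
      have hWik : W i k = ∑ ω : Fin m → Bool, zInd (ω k) * hInd (ω i) := by
        apply Finset.sum_congr rfl
        intro ω _
        cases hb : ω k <;> simp [zInd, hb]
      rw [hWik, show (8:ℝ) = 2 * 4 by norm_num, mul_assoc, pair_sum m i k hik]
    have h0 : W i i = 0 := by
      apply Finset.sum_eq_zero
      intro ω _
      cases hb : ω i <;> simp [zInd, hInd, hb]
    have hE : ∀ j ∈ (Finset.univ.erase k).erase i, (8:ℝ) * W i j = 2^m := by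
      intro j hj
      exact triple_sum m i k j hik (Finset.ne_of_mem_erase hj)
        (Finset.ne_of_mem_erase (Finset.mem_of_mem_erase hj))
    have hEcard : (((Finset.univ.erase k).erase i).card : ℝ) = (m : ℝ) - 2 := by
      rw [Finset.card_erase_of_mem (Finset.mem_erase.mpr ⟨hik, Finset.mem_univ i⟩),
          Finset.card_erase_of_mem (Finset.mem_univ k), Finset.card_univ, Fintype.card_fin]
      have : m - 1 - 1 = m - 2 := by omega
      rw [this, Nat.cast_sub hm2]
      norm_num
    have hEsum : (8:ℝ) * ∑ j ∈ (Finset.univ.erase k).erase i, W i j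
        = ((m : ℝ) - 2) * 2^m := by
      rw [Finset.mul_sum, Finset.sum_congr rfl hE, Finset.sum_const, nsmul_eq_mul, hEcard]
    rw [hsplit]
    rw [mul_add, mul_add, h8k, h0, mul_zero, hEsum]
    ring
  have e1 : (8:ℝ) * T1 = ((t-1 : ℕ) : ℝ) * ((m : ℝ) * 2^m) := by
    rw [hT1', Finset.mul_sum, Finset.sum_congr rfl hinner, Finset.sum_const, hAcard,
        nsmul_eq_mul]
  -- conclude
  have hpow : ((2:ℝ)^m) ≠ 0 := by positivity
  have hv1 : T1 = ((t-1 : ℕ) : ℝ) * ((m : ℝ) * 2^m) / 8 := by linarith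
  have hv2 : T2 = ((t-1 : ℕ) : ℝ) * 2^m / 4 := by linarith
  have hv3 : T3 = (m : ℝ) * 2^m / 2 := by linarith
  rw [hv1, hv2, hv3]
  field_simp
  ring
end

section
/- The variance of N = Y + ∑_{t=1}^m C_t on the uniform space {H,T}^m equals m³/48 + m²/32 + 19m/96. -/
open Finset

lemma X_snoc_le {m t : ℕ} (ht : t ≤ m) (ω : Fin m → Bool) (b : Bool) :
    X (m+1) t (Fin.snoc ω b) = X m t ω := by
  simp only [X, Finset.card_filter]
  rw [Fin.sum_univ_castSucc]
  simp [Fin.snoc_castSucc, Fin.snoc_last, Nat.lt_irrefl]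
  intro h; omega

lemma X_snoc_top {m : ℕ} (ω : Fin m → Bool) (b : Bool) :
    X (m+1) (m+1) (Fin.snoc ω b) = X m m ω + (if b then 1 else 0) := by
  simp only [X, Finset.card_filter]
  rw [Fin.sum_univ_castSucc]
  simp only [Fin.snoc_castSucc, Fin.snoc_last, Fin.coe_castSucc, Fin.val_last]
  congr 1
  · apply Finset.sum_congr rfl; intro i _
    have : (i:ℕ) < m+1 := by omega
    have : (i:ℕ) < m := i.isLt
    simp [*]
  · cases b <;> simp

lemma X_le {m t : ℕ} (ω : Fin m → Bool) : X m t ω ≤ m := by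
  simpa [X] using (Finset.card_filter_le Finset.univ _).trans (le_of_eq (by simp))

lemma C_snoc {m t : ℕ} (ht1 : 1 ≤ t) (ht : t ≤ m) (ω : Fin m → Bool) (b : Bool) :
    C (m+1) t (Fin.snoc ω b) = C m t ω := by
  have h1 : t - 1 < m := by omega
  have h2 : t - 1 < m + 1 := by omega
  have hc : (⟨t-1, h2⟩ : Fin (m+1)) = Fin.castSucc ⟨t-1, h1⟩ := rfl
  simp only [C, dif_pos h1, dif_pos h2, hc, Fin.snoc_castSucc]
  rw [X_snoc_le (by omega)]

lemma C_snoc_top {m : ℕ} (ω : Fin m → Bool) (b : Bool) :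
    C (m+1) (m+1) (Fin.snoc ω b) = if b then 0 else X m m ω := by
  have h2 : m + 1 - 1 < m + 1 := by omega
  have hc : (⟨m+1-1, h2⟩ : Fin (m+1)) = Fin.last m := rfl
  simp only [C, dif_pos h2, hc, Fin.snoc_last]
  cases b <;> simp [X_snoc_le (le_refl m)]

lemma Y_snoc {m : ℕ} (ω : Fin m → Bool) (b : Bool) :
    Y (m+1) (Fin.snoc ω b) = Y m ω + (if b then 0 else 1) := by
  have := X_le (m := m) (t := m) ω
  simp only [Y, X_snoc_top]
  cases b <;> simp <;> omega

lemma N_snoc {m : ℕ} (ω : Fin m → Bool) (b : Bool) :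
    N (m+1) (Fin.snoc ω b) = N m ω + (if b then 0 else 1 + X m m ω) := by
  simp only [N, Y_snoc]
  rw [Finset.sum_Icc_succ_top (by omega : 1 ≤ m+1)]
  rw [Finset.sum_congr rfl (fun t htm => C_snoc (Finset.mem_Icc.mp htm).1 (Finset.mem_Icc.mp htm).2 ω b),
      C_snoc_top]
  cases b <;> simp <;> ring

lemma sum_snoc_split {m : ℕ} (F : (Fin (m+1) → Bool) → ℝ) :
    ∑ ω : Fin (m+1) → Bool, F ω
      = ∑ ω : Fin m → Bool, (F (Fin.snoc ω true) + F (Fin.snoc ω false)) := by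
  let e : (Fin m → Bool) × Bool ≃ (Fin (m+1) → Bool) :=
    { toFun := fun p => Fin.snoc p.1 p.2
      invFun := fun f => (fun i => f i.castSucc, f (Fin.last m))
      left_inv := by intro p; simp
      right_inv := by
        intro f; funext i
        refine Fin.lastCases ?_ ?_ i <;> simp }
  rw [← Equiv.sum_comp e F, Fintype.sum_prod_type]
  refine Finset.sum_congr rfl fun ω _ => ?_
  rw [Fintype.sum_bool]; rfl

lemma moments (m : ℕ) :
    (∑ ω : Fin m → Bool, (X m m ω : ℝ)) = 2^m * (m/2) ∧
    (∑ ω : Fin m → Bool, (X m m ω : ℝ)^2) = 2^m * ((m^2+m)/4) ∧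
    (∑ ω : Fin m → Bool, (N m ω : ℝ)) = 2^m * ((m^2+3*m)/8) ∧
    (∑ ω : Fin m → Bool, (N m ω : ℝ) * (X m m ω : ℝ)) = 2^m * ((m^3+3*m^2-4*m)/16) ∧
    (∑ ω : Fin m → Bool, (N m ω : ℝ)^2) = 2^m * ((3*m^4+22*m^3+33*m^2+38*m)/192) := by
  induction m with
  | zero => norm_num [X, N, Y, C]
  | succ m ih =>
    obtain ⟨h1, h2, h3, h4, h5⟩ := ih
    refine ⟨?_, ?_, ?_, ?_, ?_⟩
    · rw [sum_snoc_split, Finset.sum_congr rfl (fun ω _ => by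
        simp [X_snoc_top]; ring_nf
        : ∀ ω ∈ Finset.univ, _ = 2*(X m m ω:ℝ) + 1)]
      rw [Finset.sum_add_distrib, ← Finset.mul_sum, Finset.sum_const, Finset.card_univ]
      simp only [Fintype.card_fun, Fintype.card_bool, Fintype.card_fin, nsmul_eq_mul, mul_one]
      rw [h1]; push_cast; ring
    · rw [sum_snoc_split, Finset.sum_congr rfl (fun ω _ => by
        simp [X_snoc_top]; ring_nf
        : ∀ ω ∈ Finset.univ, _ = 2*(X m m ω:ℝ)^2 + 2*(X m m ω:ℝ) + 1)]
      rw [Finset.sum_add_distrib, Finset.sum_add_distrib, ← Finset.mul_sum, ← Finset.mul_sum,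
        Finset.sum_const, Finset.card_univ]
      simp only [Fintype.card_fun, Fintype.card_bool, Fintype.card_fin, nsmul_eq_mul, mul_one]
      rw [h1, h2]; push_cast; ring
    · rw [sum_snoc_split, Finset.sum_congr rfl (fun ω _ => by
        simp [N_snoc]; ring_nf
        : ∀ ω ∈ Finset.univ, _ = 2*(N m ω:ℝ) + (X m m ω:ℝ) + 1)]
      rw [Finset.sum_add_distrib, Finset.sum_add_distrib, ← Finset.mul_sum,
        Finset.sum_const, Finset.card_univ]
      simp only [Fintype.card_fun, Fintype.card_bool, Fintype.card_fin, nsmul_eq_mul, mul_one]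
      rw [h1, h3]; push_cast; ring
    · rw [sum_snoc_split, Finset.sum_congr rfl (fun ω _ => by
        simp [N_snoc, X_snoc_top]; ring_nf
        : ∀ ω ∈ Finset.univ, _ = 2*((N m ω:ℝ)*(X m m ω:ℝ)) + (N m ω:ℝ) + (X m m ω:ℝ)^2 + (X m m ω:ℝ))]
      rw [Finset.sum_add_distrib, Finset.sum_add_distrib, Finset.sum_add_distrib, ← Finset.mul_sum]
      rw [h1, h2, h3, h4]; push_cast; ring
    · rw [sum_snoc_split, Finset.sum_congr rfl (fun ω _ => by
        simp [N_snoc, X_snoc_top]; ring_nf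
        : ∀ ω ∈ Finset.univ, _ = 2*(N m ω:ℝ)^2 + 2*((N m ω:ℝ)*(X m m ω:ℝ)) + 2*(N m ω:ℝ)
            + (X m m ω:ℝ)^2 + 2*(X m m ω:ℝ) + 1)]
      rw [Finset.sum_add_distrib, Finset.sum_add_distrib, Finset.sum_add_distrib,
        Finset.sum_add_distrib, Finset.sum_add_distrib, ← Finset.mul_sum, ← Finset.mul_sum,
        ← Finset.mul_sum, ← Finset.mul_sum, Finset.sum_const, Finset.card_univ]
      simp only [Fintype.card_fun, Fintype.card_bool, Fintype.card_fin, nsmul_eq_mul, mul_one]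
      rw [h1, h2, h3, h4, h5]; push_cast; ring

lemma variance_eq (m : ℕ) (f : (Fin m → Bool) → ℝ) :
    variance m f = (∑ ω : Fin m → Bool, (f ω)^2) / 2^m - (expec m f)^2 := by
  have hcard : (Finset.univ : Finset (Fin m → Bool)).card = 2^m := by
    simp [Finset.card_univ]
  have h2 : (2:ℝ)^m ≠ 0 := by positivity
  simp only [variance, expec]
  rw [Finset.sum_congr rfl (fun ω _ => by ring
    : ∀ ω ∈ Finset.univ, (f ω - (∑ ω : Fin m → Bool, f ω) / 2 ^ m)^2
      = (f ω)^2 - ((∑ ω : Fin m → Bool, f ω) / 2 ^ m * 2) * f ω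
        + ((∑ ω : Fin m → Bool, f ω) / 2 ^ m)^2)]
  rw [Finset.sum_add_distrib, Finset.sum_sub_distrib, ← Finset.mul_sum, Finset.sum_const, hcard,
    nsmul_eq_mul]
  push_cast
  field_simp
  ring

/-- `Var N = m³/48 + m²/32 + 19m/96`. -/
theorem variance_N (m : ℕ) :
    variance m (fun ω => (N m ω : ℝ)) =
      (m : ℝ) ^ 3 / 48 + (m : ℝ) ^ 2 / 32 + 19 * (m : ℝ) / 96 := by
  obtain ⟨-, -, h3, -, h5⟩ := moments m
  have h2 : (2:ℝ)^m ≠ 0 := by positivity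
  rw [variance_eq, expec, h3, h5]
  field_simp
  ring
end

section
/- For m ≥ 3 and d > 0, the sum of p(n) over integers n with |n − m(m+3)/8| < d·m^{3/2}/4 exceeds 2^m(1 − 1/d²). -/
/-- The partition function: the number of partitions of `n`. -/
def p (n : ℕ) : ℕ := Fintype.card (Nat.Partition n)

namespace SumPGt

def parts : ∀ {m : ℕ}, (Fin m → Bool) → Multiset ℕ
  | 0, _ => 0
  | _ + 1, ω => if ω 0 then 1 ::ₘ parts (Fin.tail ω) else (parts (Fin.tail ω)).map (· + 1)

lemma parts_cons {m : ℕ} (b : Bool) (ω : Fin m → Bool) :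
    parts (Fin.cons b ω) = if b then 1 ::ₘ parts ω else (parts ω).map (· + 1) := by
  simp [parts, Fin.tail_cons]

lemma parts_pos : ∀ {m : ℕ} (ω : Fin m → Bool), ∀ x ∈ parts ω, 0 < x
  | 0, ω => by simp [parts]
  | m + 1, ω => by
    rw [parts]
    split
    · intro x hx
      rcases Multiset.mem_cons.1 hx with h | h
      · simp [h]
      · exact parts_pos _ x h
    · intro x hx
      obtain ⟨y, -, rfl⟩ := Multiset.mem_map.1 hx
      omega

lemma parts_injective : ∀ {m : ℕ}, Function.Injective (@parts m)
  | 0 => fun ω ω' _ => Subsingleton.elim _ _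
  | m + 1 => by
    intro ω ω' h
    rw [← Fin.cons_self_tail ω, ← Fin.cons_self_tail ω'] at h ⊢
    rw [parts_cons, parts_cons] at h
    have h12 : ∀ (A B : Multiset ℕ), (∀ x ∈ A, 0 < x) → ¬(1 ::ₘ B = A.map (· + 1)) := by
      intro A B ha hcon
      have h1 : (1 : ℕ) ∈ A.map (· + 1) := by rw [← hcon]; exact Multiset.mem_cons_self _ _
      obtain ⟨y, hy, hy1⟩ := Multiset.mem_map.1 h1
      have := ha y hy
      omega
    cases hb : ω 0 <;> cases hb' : ω' 0 <;> rw [hb, hb'] at h <;>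
      simp only [reduceIte, Bool.false_eq_true, if_false, if_true] at h
    · have : Fin.tail ω = Fin.tail ω' :=
        parts_injective (Multiset.map_injective (add_left_injective 1) h)
      rw [this]
    · exact absurd h.symm (h12 _ _ (parts_pos _))
    · exact absurd h (h12 _ _ (parts_pos _))
    · have : Fin.tail ω = Fin.tail ω' :=
        parts_injective ((Multiset.cons_inj_right _).1 h)
      rw [this]

def N {m : ℕ} (ω : Fin m → Bool) : ℕ := (parts ω).sum

def H {m : ℕ} (ω : Fin m → Bool) : ℕ := Multiset.card (parts ω)

lemma sum_map_succ (s : Multiset ℕ) : (s.map (· + 1)).sum = s.sum + Multiset.card s := by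
  induction s using Multiset.induction with
  | empty => simp
  | cons a s ih => simp [ih]; omega

lemma N_cons_true {m : ℕ} (ω : Fin m → Bool) : N (Fin.cons true ω) = N ω + 1 := by
  simp [N, parts_cons]; omega

lemma N_cons_false {m : ℕ} (ω : Fin m → Bool) : N (Fin.cons false ω) = N ω + H ω := by
  simp [N, H, parts_cons, sum_map_succ]

lemma H_cons_true {m : ℕ} (ω : Fin m → Bool) : H (Fin.cons true ω) = H ω + 1 := by
  simp [H, parts_cons]

lemma H_cons_false {m : ℕ} (ω : Fin m → Bool) : H (Fin.cons false ω) = H ω := by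
  simp [H, parts_cons]

lemma sum_decomp {m : ℕ} (f : (Fin (m + 1) → Bool) → ℝ) :
    ∑ ω : Fin (m + 1) → Bool, f ω
      = ∑ ω : Fin m → Bool, (f (Fin.cons true ω) + f (Fin.cons false ω)) := by
  rw [← Equiv.sum_comp (Fin.consEquiv fun _ => Bool) f, Fintype.sum_prod_type,
    Fintype.sum_bool, ← Finset.sum_add_distrib]
  rfl

lemma sum_one (m : ℕ) : ∑ _ω : Fin m → Bool, (1 : ℝ) = 2 ^ m := by
  rw [Finset.sum_const, nsmul_eq_mul, mul_one, Finset.card_univ]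
  simp

lemma sum_H (m : ℕ) : ∑ ω : Fin m → Bool, (H ω : ℝ) = 2 ^ m * m / 2 := by
  induction m with
  | zero => simp [H, parts]
  | succ m ih =>
    rw [sum_decomp]
    have expand : ∑ ω : Fin m → Bool, ((H (Fin.cons true ω) : ℝ) + (H (Fin.cons false ω) : ℝ))
        = 2 * (∑ ω : Fin m → Bool, (H ω : ℝ)) + ∑ _ω : Fin m → Bool, (1 : ℝ) := by
      rw [Finset.mul_sum, ← Finset.sum_add_distrib]
      refine Finset.sum_congr rfl fun ω _ => ?_
      rw [H_cons_true, H_cons_false]; push_cast; ring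
    rw [expand, ih, sum_one]
    push_cast; ring

lemma sum_H2 (m : ℕ) : ∑ ω : Fin m → Bool, (H ω : ℝ) ^ 2 = 2 ^ m * (m ^ 2 + m) / 4 := by
  induction m with
  | zero => simp [H, parts]
  | succ m ih =>
    rw [sum_decomp]
    have expand : ∑ ω : Fin m → Bool,
          ((H (Fin.cons true ω) : ℝ) ^ 2 + (H (Fin.cons false ω) : ℝ) ^ 2)
        = 2 * (∑ ω : Fin m → Bool, (H ω : ℝ) ^ 2) + 2 * (∑ ω : Fin m → Bool, (H ω : ℝ))
          + ∑ _ω : Fin m → Bool, (1 : ℝ) := by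
      rw [Finset.mul_sum, Finset.mul_sum, ← Finset.sum_add_distrib, ← Finset.sum_add_distrib]
      refine Finset.sum_congr rfl fun ω _ => ?_
      rw [H_cons_true, H_cons_false]; push_cast; ring
    rw [expand, ih, sum_H, sum_one]
    push_cast; ring

lemma sum_N (m : ℕ) : ∑ ω : Fin m → Bool, (N ω : ℝ) = 2 ^ m * (m * (m + 3)) / 8 := by
  induction m with
  | zero => simp [N, parts]
  | succ m ih =>
    rw [sum_decomp]
    have expand : ∑ ω : Fin m → Bool, ((N (Fin.cons true ω) : ℝ) + (N (Fin.cons false ω) : ℝ))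
        = 2 * (∑ ω : Fin m → Bool, (N ω : ℝ)) + (∑ ω : Fin m → Bool, (H ω : ℝ))
          + ∑ _ω : Fin m → Bool, (1 : ℝ) := by
      rw [Finset.mul_sum, ← Finset.sum_add_distrib, ← Finset.sum_add_distrib]
      refine Finset.sum_congr rfl fun ω _ => ?_
      rw [N_cons_true, N_cons_false]; push_cast; ring
    rw [expand, ih, sum_H, sum_one]
    push_cast; ring

lemma sum_NH (m : ℕ) : ∑ ω : Fin m → Bool, (N ω : ℝ) * (H ω : ℝ)
    = 2 ^ m * (m ^ 2 * (m + 3) + 4 * m) / 16 := by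
  induction m with
  | zero => simp [N, parts]
  | succ m ih =>
    rw [sum_decomp]
    have expand : ∑ ω : Fin m → Bool,
          ((N (Fin.cons true ω) : ℝ) * (H (Fin.cons true ω) : ℝ)
            + (N (Fin.cons false ω) : ℝ) * (H (Fin.cons false ω) : ℝ))
        = 2 * (∑ ω : Fin m → Bool, (N ω : ℝ) * (H ω : ℝ))
          + (∑ ω : Fin m → Bool, (N ω : ℝ)) + (∑ ω : Fin m → Bool, (H ω : ℝ))
          + (∑ ω : Fin m → Bool, (H ω : ℝ) ^ 2) + ∑ _ω : Fin m → Bool, (1 : ℝ) := by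
      rw [Finset.mul_sum, ← Finset.sum_add_distrib, ← Finset.sum_add_distrib,
        ← Finset.sum_add_distrib, ← Finset.sum_add_distrib]
      refine Finset.sum_congr rfl fun ω _ => ?_
      rw [N_cons_true, N_cons_false, H_cons_true, H_cons_false]; push_cast; ring
    rw [expand, ih, sum_N, sum_H, sum_H2, sum_one]
    push_cast; ring

lemma sum_N2 (m : ℕ) : ∑ ω : Fin m → Bool, (N ω : ℝ) ^ 2
    = 2 ^ m * (m * (m ^ 2 + 11) / 48 + m * (m - 1) / 32 + (m * (m + 3) / 8) ^ 2) := by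
  induction m with
  | zero => simp [N, parts]
  | succ m ih =>
    rw [sum_decomp]
    have expand : ∑ ω : Fin m → Bool,
          ((N (Fin.cons true ω) : ℝ) ^ 2 + (N (Fin.cons false ω) : ℝ) ^ 2)
        = 2 * (∑ ω : Fin m → Bool, (N ω : ℝ) ^ 2)
          + 2 * (∑ ω : Fin m → Bool, (N ω : ℝ))
          + 2 * (∑ ω : Fin m → Bool, (N ω : ℝ) * (H ω : ℝ))
          + (∑ ω : Fin m → Bool, (H ω : ℝ) ^ 2) + ∑ _ω : Fin m → Bool, (1 : ℝ) := by
      rw [Finset.mul_sum, Finset.mul_sum, Finset.mul_sum, ← Finset.sum_add_distrib,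
        ← Finset.sum_add_distrib, ← Finset.sum_add_distrib, ← Finset.sum_add_distrib]
      refine Finset.sum_congr rfl fun ω _ => ?_
      rw [N_cons_true, N_cons_false]; push_cast; ring
    rw [expand, ih, sum_N, sum_NH, sum_H2, sum_one]
    push_cast; ring

lemma sum_sq (m : ℕ) :
    ∑ ω : Fin m → Bool, ((N ω : ℝ) - m * ((m : ℝ) + 3) / 8) ^ 2
      = 2 ^ m * (m * (m ^ 2 + 11) / 48 + m * ((m : ℝ) - 1) / 32) := by
  have expand : ∑ ω : Fin m → Bool, ((N ω : ℝ) - m * ((m : ℝ) + 3) / 8) ^ 2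
      = (∑ ω : Fin m → Bool, (N ω : ℝ) ^ 2)
        - (m * ((m : ℝ) + 3) / 4) * (∑ ω : Fin m → Bool, (N ω : ℝ))
        + (m * ((m : ℝ) + 3) / 8) ^ 2 * ∑ _ω : Fin m → Bool, (1 : ℝ) := by
    rw [Finset.mul_sum, Finset.mul_sum, ← Finset.sum_sub_distrib, ← Finset.sum_add_distrib]
    exact Finset.sum_congr rfl fun ω _ => by ring
  rw [expand, sum_N2, sum_N, sum_one]
  ring


lemma fiber_le (m n : ℕ) :
    (Finset.univ.filter fun ω : Fin m → Bool => N ω = n).card ≤ p n := by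
  rw [p, ← Finset.card_univ]
  apply Finset.card_le_card_of_injOn
    (fun ω => if h : N ω = n then (⟨parts ω, fun hi => parts_pos ω _ hi, h⟩ : Nat.Partition n)
      else default)
  · exact fun _ _ => Finset.mem_univ _
  · intro ω hω ω' hω' hf
    simp only [Finset.coe_filter, Set.mem_setOf_eq, Finset.mem_univ, true_and] at hω hω'
    simp only [dif_pos hω, dif_pos hω'] at hf
    exact parts_injective (congrArg Nat.Partition.parts hf)

theorem main (m : ℕ) (hm : 3 ≤ m) (d : ℝ) (hd : 0 < d) :
    (2 : ℝ) ^ m * (1 - 1 / d ^ 2) <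
      ∑' n : ℕ, if |(n : ℝ) - (m : ℝ) * ((m : ℝ) + 3) / 8| <
          d * (m : ℝ) ^ ((3 : ℝ) / 2) / 4 then (p n : ℝ) else 0 := by
  classical
  set μ : ℝ := (m : ℝ) * ((m : ℝ) + 3) / 8 with hμ
  set t : ℝ := d * (m : ℝ) ^ ((3 : ℝ) / 2) / 4 with htdef
  have hm0 : (0 : ℝ) < m := by
    have : (3 : ℝ) ≤ m := by exact_mod_cast hm
    linarith
  have hmR : (3 : ℝ) ≤ m := by exact_mod_cast hm
  have ht2 : t ^ 2 = d ^ 2 * (m : ℝ) ^ (3 : ℕ) / 16 := by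
    have h1 : ((m : ℝ) ^ ((3 : ℝ) / 2)) ^ (2 : ℕ) = (m : ℝ) ^ (3 : ℕ) := by
      rw [← Real.rpow_natCast ((m : ℝ) ^ ((3 : ℝ) / 2)) 2, ← Real.rpow_mul hm0.le,
        ← Real.rpow_natCast (m : ℝ) 3]
      norm_num
    calc t ^ 2 = d ^ 2 * ((m : ℝ) ^ ((3 : ℝ) / 2)) ^ (2 : ℕ) / 16 := by rw [htdef]; ring
    _ = _ := by rw [h1]
  have ht : 0 < t := by
    have := Real.rpow_pos_of_pos hm0 ((3 : ℝ) / 2)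
    rw [htdef]; positivity
  set good : Finset (Fin m → Bool) := Finset.univ.filter fun ω => |(N ω : ℝ) - μ| < t with hgood
  set bad : Finset (Fin m → Bool) := Finset.univ.filter fun ω => ¬|(N ω : ℝ) - μ| < t with hbad
  -- Chebyshev
  have hcheb : (bad.card : ℝ) * t ^ 2
      ≤ 2 ^ m * ((m : ℝ) * ((m : ℝ) ^ 2 + 11) / 48 + (m : ℝ) * ((m : ℝ) - 1) / 32) := by
    rw [← sum_sq m]
    calc (bad.card : ℝ) * t ^ 2 = ∑ _ω ∈ bad, t ^ 2 := by
          rw [Finset.sum_const, nsmul_eq_mul]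
      _ ≤ ∑ ω ∈ bad, ((N ω : ℝ) - μ) ^ 2 := by
          refine Finset.sum_le_sum fun ω hω => ?_
          rw [hbad, Finset.mem_filter] at hω
          have habs : t ≤ |(N ω : ℝ) - μ| := not_lt.1 hω.2
          calc t ^ 2 ≤ |(N ω : ℝ) - μ| ^ 2 := by
                exact pow_le_pow_left₀ ht.le habs 2
            _ = ((N ω : ℝ) - μ) ^ 2 := sq_abs _
      _ ≤ ∑ ω : Fin m → Bool, ((N ω : ℝ) - μ) ^ 2 := by
          refine Finset.sum_le_sum_of_subset_of_nonneg (Finset.filter_subset _ _)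
            fun ω _ _ => by positivity
  have hVlt : (m : ℝ) * ((m : ℝ) ^ 2 + 11) / 48 + (m : ℝ) * ((m : ℝ) - 1) / 32
      < t ^ 2 / d ^ 2 := by
    have h3 : t ^ 2 / d ^ 2 = (m : ℝ) ^ 3 / 16 := by
      rw [ht2]; field_simp
    rw [h3]
    nlinarith [hmR]
  have hbadlt : (bad.card : ℝ) < 2 ^ m / d ^ 2 := by
    have h2 : (bad.card : ℝ) * t ^ 2 < (2 ^ m / d ^ 2) * t ^ 2 := by
      calc (bad.card : ℝ) * t ^ 2 ≤ _ := hcheb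
        _ < 2 ^ m * (t ^ 2 / d ^ 2) := by
            apply mul_lt_mul_of_pos_left hVlt (by positivity)
        _ = (2 ^ m / d ^ 2) * t ^ 2 := by ring
    exact lt_of_mul_lt_mul_right h2 (by positivity)
  have hcards : (good.card : ℝ) + bad.card = 2 ^ m := by
    have hc := Finset.card_filter_add_card_filter_not
      (s := (Finset.univ : Finset (Fin m → Bool))) (p := fun ω => |(N ω : ℝ) - μ| < t)
    have hcu : (Finset.univ : Finset (Fin m → Bool)).card = 2 ^ m := by simp
    rw [hcu] at hc
    rw [hgood, hbad]
    exact_mod_cast hc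
  have hgoodgt : (2 : ℝ) ^ m * (1 - 1 / d ^ 2) < good.card := by
    have : (2 : ℝ) ^ m * (1 - 1 / d ^ 2) = 2 ^ m - 2 ^ m / d ^ 2 := by ring
    rw [this]
    have : (good.card : ℝ) = 2 ^ m - bad.card := by linarith [hcards]
    rw [this]
    linarith [hbadlt]
  -- counting via partitions
  have hfiber : good.card = ∑ n ∈ good.image N, (good.filter fun ω => N ω = n).card :=
    Finset.card_eq_sum_card_fiberwise fun x hx => Finset.mem_image_of_mem _ hx
  have hcount : (good.card : ℝ) ≤ ∑ n ∈ good.image N, (p n : ℝ) := by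
    rw [hfiber]
    push_cast
    refine Finset.sum_le_sum fun n _ => ?_
    have h1 : (good.filter fun ω => N ω = n).card
        ≤ (Finset.univ.filter fun ω : Fin m → Bool => N ω = n).card :=
      Finset.card_le_card (Finset.filter_subset_filter _ (Finset.subset_univ _))
    exact_mod_cast le_trans h1 (fiber_le m n)
  set φ : ℕ → ℝ := fun n => if |(n : ℝ) - μ| < t then (p n : ℝ) else 0 with hφ
  have hφeq : ∀ n ∈ good.image N, φ n = (p n : ℝ) := by
    intro n hn
    obtain ⟨ω, hω, rfl⟩ := Finset.mem_image.1 hn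
    rw [hgood, Finset.mem_filter] at hω
    rw [hφ]
    exact if_pos hω.2
  have hφ0 : ∀ n, n ∉ Finset.range (⌈μ + t⌉₊ + 1) → φ n = 0 := by
    intro n hn
    rw [Finset.mem_range, not_lt] at hn
    rw [hφ]
    refine if_neg (not_lt.2 ?_)
    have h1 : μ + t ≤ (⌈μ + t⌉₊ : ℝ) := Nat.le_ceil _
    have h2 : ((⌈μ + t⌉₊ + 1 : ℕ) : ℝ) ≤ n := by exact_mod_cast hn
    push_cast at h2
    calc t ≤ (n : ℝ) - μ := by linarith
      _ ≤ |(n : ℝ) - μ| := le_abs_self _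
  have hsummable : Summable φ := summable_of_ne_finset_zero hφ0
  have htsum : ∑ n ∈ good.image N, φ n ≤ ∑' n, φ n := by
    refine Summable.sum_le_tsum _ (fun n _ => ?_) hsummable
    simp only [hφ]
    split
    · positivity
    · exact le_refl 0
  calc (2 : ℝ) ^ m * (1 - 1 / d ^ 2) < good.card := hgoodgt
    _ ≤ ∑ n ∈ good.image N, (p n : ℝ) := hcount
    _ = ∑ n ∈ good.image N, φ n := (Finset.sum_congr rfl hφeq).symm
    _ ≤ ∑' n, φ n := htsum

end SumPGt

/-- For `m ≥ 3` and `d > 0`, the sum of `p n` over `n` with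
`|n - m(m+3)/8| < d·m^{3/2}/4` exceeds `2^m (1 - 1/d²)`. -/
theorem sum_p_gt (m : ℕ) (hm : 3 ≤ m) (d : ℝ) (hd : 0 < d) :
    (2 : ℝ) ^ m * (1 - 1 / d ^ 2) <
      ∑' n : ℕ, if |(n : ℝ) - (m : ℝ) * ((m : ℝ) + 3) / 8| <
          d * (m : ℝ) ^ ((3 : ℝ) / 2) / 4 then (p n : ℝ) else 0 :=
  SumPGt.main m hm d hd
end

section
/- For every η > 0 there exists M such that for all m ≥ M, p(⌊m²(1+η)/8⌋) > 2^m · 4/(3√3·m^{3/2}). -/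
/-!
Every composition of `n + 1` into `k + 1` parts determines a partition, and at most
`(k + 1)!` compositions give the same partition, so `n.choose k ≤ (k + 1)! * p (n + 1)`.
Choosing `k + 1 = ⌊m / 3⌋` parts, the number `n + 1 = ⌊m²(1 + η)/8⌋` exceeds
`9(k + 1)²/8 + k` for large `m`, and Stirling's upper bound for `(k + 1)!` turns the binomial
bound into `p(n + 1) ≥ (9e²/8)^k / (k + 1)³`. Since `9e²/8 > 8`, this beats
`2^m ≤ 32 · 8^k` by an exponential factor.
-/

open Finset Nat Real Filter

theorem compositionAsSetEquiv_symm_apply_length (n : ℕ) (s : Finset (Fin n)) :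
    ((compositionAsSetEquiv (n + 1)).symm s).length = #s + 1 := by
  have hb : ((compositionAsSetEquiv (n + 1)).symm s).boundaries =
      insert 0 (insert (Fin.last (n + 1)) (s.map ((Fin.succEmb n).trans Fin.castSuccEmb))) := by
    ext i
    simp [compositionAsSetEquiv, Fin.ext_iff (b := i), eq_comm (a := (i : ℕ))]
  rw [CompositionAsSet.length, hb, card_insert_of_notMem, card_insert_of_notMem, card_map]
  · simp
  · simp
  · simp [Fin.ext_iff]

theorem Composition.card_filter_length_eq_choose (n k : ℕ) :
    #{c : Composition (n + 1) | c.length = k + 1} = n.choose k := by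
  let e : Composition (n + 1) ≃ Finset (Fin n) :=
    (compositionEquiv (n + 1)).trans (compositionAsSetEquiv (n + 1))
  have hlen (c : Composition (n + 1)) : c.length = #(e c) + 1 := by
    rw [← compositionAsSetEquiv_symm_apply_length n (e c)]
    simp [e, compositionEquiv]
  rw [show n.choose k = #(powersetCard k (univ : Finset (Fin n))) by simp]
  exact card_equiv e fun c => by simp [hlen]

theorem Nat.Partition.card_filter_ofComposition_eq_le {n : ℕ} (μ : n.Partition) :
    #{c : Composition n | Nat.Partition.ofComposition n c = μ} ≤ μ.parts.card ! := by
  calc _ ≤ #μ.parts.toList.permutations.toFinset := by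
        refine card_le_card_of_injOn Composition.blocks (fun c hc => ?_)
          fun c _ c' _ h => Composition.ext h
        rw [coe_filter] at hc
        simp [← Multiset.coe_eq_coe, ← hc.2]
    _ ≤ μ.parts.toList.permutations.length := List.toFinset_card_le _
    _ = μ.parts.card ! := by rw [List.length_permutations, Multiset.length_toList]

theorem choose_le_factorial_mul_p (n k : ℕ) : n.choose k ≤ (k + 1)! * p (n + 1) := by
  let S : Finset (Composition (n + 1)) := {c | c.length = k + 1}
  calc n.choose k = #S := (Composition.card_filter_length_eq_choose n k).symm
    _ ≤ (k + 1)! * #(S.image (Nat.Partition.ofComposition (n + 1))) := by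
      refine card_le_mul_card_image S _ fun μ hμ => ?_
      obtain ⟨c, hc, rfl⟩ := mem_image.mp hμ
      calc _ ≤ #{c' : Composition (n + 1) | Nat.Partition.ofComposition _ c' =
              Nat.Partition.ofComposition _ c} :=
            card_le_card (filter_subset_filter _ (subset_univ _))
        _ ≤ _ := Nat.Partition.card_filter_ofComposition_eq_le _
        _ = (k + 1)! := by simp [(mem_filter.mp hc).2]
    _ ≤ (k + 1)! * p (n + 1) := by gcongr; exact card_le_univ _

theorem factorial_succ_mul_exp_one_pow_le (r : ℕ) :
    ((r + 1)! : ℝ) * exp 1 ^ r ≤ √(r + 1) * (r + 1) ^ (r + 1) := by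
  have h : Stirling.stirlingSeq (r + 1) ≤ exp 1 / √2 :=
    Stirling.stirlingSeq_one ▸ Stirling.stirlingSeq'_antitone (Nat.zero_le r)
  rw [Stirling.stirlingSeq, div_le_div_iff₀ (by positivity) (by positivity), sqrt_mul zero_le_two,
    div_pow] at h
  push_cast at h
  field_simp at h
  rw [pow_succ] at h
  exact le_of_mul_le_mul_left (by linarith) (exp_pos 1)

theorem pow_div_cube_le_pow_div_factorial_sq (r : ℕ) :
    (9 * exp 1 ^ 2 / 8) ^ r / ((r : ℝ) + 1) ^ 3 ≤
      (9 * ((r : ℝ) + 1) ^ 2 / 8) ^ r / ((r + 1)! : ℝ) ^ 2 := by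
  have hsq : (((r + 1)! : ℝ) * exp 1 ^ r) ^ 2 ≤ ((r : ℝ) + 1) ^ (2 * r + 3) := by
    calc _ ≤ (√(r + 1) * (r + 1) ^ (r + 1)) ^ 2 :=
          pow_le_pow_left₀ (by positivity) (factorial_succ_mul_exp_one_pow_le r) 2
      _ = _ := by rw [mul_pow, sq_sqrt (by positivity)]; ring
  rw [div_le_div_iff₀ (by positivity) (by positivity)]
  calc (9 * exp 1 ^ 2 / 8) ^ r * ((r + 1)! : ℝ) ^ 2
      = (9 / 8) ^ r * (((r + 1)! : ℝ) * exp 1 ^ r) ^ 2 := by ring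
    _ ≤ (9 / 8) ^ r * ((r : ℝ) + 1) ^ (2 * r + 3) := by gcongr
    _ = _ := by rw [pow_add, pow_mul, ← mul_assoc, ← mul_pow]; ring

theorem pow_div_factorial_sq_le_p {n k : ℕ} {A : ℝ} (hA : 0 ≤ A) (hAn : A + k ≤ n + 1) :
    A ^ k / ((k + 1)! : ℝ) ^ 2 ≤ p (n + 1) := by
  have hk : k ≤ n + 1 := by exact_mod_cast (le_add_of_nonneg_left hA).trans hAn
  have hAn' : A ≤ (n + 1 - k : ℕ) := by push_cast [hk]; linarith
  have hfac : (k ! : ℝ) ≤ (k + 1)! := by exact_mod_cast Nat.factorial_le k.le_succ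
  calc A ^ k / ((k + 1)! : ℝ) ^ 2 = A ^ k / (k + 1)! / (k + 1)! := by ring
    _ ≤ ((n + 1 - k : ℕ) : ℝ) ^ k / k ! / (k + 1)! := by gcongr
    _ ≤ n.choose k / (k + 1)! := by gcongr; exact Nat.pow_le_choose k n
    _ ≤ p (n + 1) := by
      rw [div_le_iff₀ (by positivity), mul_comm]
      exact_mod_cast choose_le_factorial_mul_p n k

theorem eventually_mul_eight_pow_mul_cube_lt :
    ∀ᶠ r : ℕ in atTop, 32 * 8 ^ r * ((r : ℝ) + 1) ^ 3 < (9 * exp 1 ^ 2 / 8) ^ r := by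
  have hβ : 1 < 9 * exp 1 ^ 2 / 64 := by nlinarith [exp_one_gt_d9]
  filter_upwards [(tendsto_pow_const_div_const_pow_of_one_lt 3 hβ).eventually
    (gt_mem_nhds (by norm_num : (0 : ℝ) < 1 / 256)), eventually_ge_atTop 1] with r hr hr1
  have hr1' : (1 : ℝ) ≤ r := by exact_mod_cast hr1
  have h8 : (0 : ℝ) < 8 ^ r := by positivity
  rw [div_lt_iff₀ (by positivity)] at hr
  calc 32 * 8 ^ r * ((r : ℝ) + 1) ^ 3 ≤ 256 * (r : ℝ) ^ 3 * 8 ^ r := by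
        nlinarith [pow_le_pow_left₀ (by positivity) (by linarith : (r : ℝ) + 1 ≤ 2 * r) 3]
    _ < (9 * exp 1 ^ 2 / 64) ^ r * 8 ^ r := by nlinarith
    _ = _ := by rw [← mul_pow]; ring_nf

theorem pow_div_cube_le_p {N r : ℕ} (h : 9 * ((r : ℝ) + 1) ^ 2 / 8 + r ≤ N) :
    (9 * exp 1 ^ 2 / 8) ^ r / ((r : ℝ) + 1) ^ 3 ≤ p N := by
  obtain ⟨n, rfl⟩ : ∃ n, N = n + 1 := Nat.exists_eq_add_one.mpr <| by
    exact_mod_cast (by positivity : (0 : ℝ) < 9 * ((r : ℝ) + 1) ^ 2 / 8 + r).trans_le h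
  exact (pow_div_cube_le_pow_div_factorial_sq r).trans
    (pow_div_factorial_sq_le_p (by positivity) (by exact_mod_cast h))

/-- For every `η > 0`, for all sufficiently large `m`,
`p(⌊m²(1+η)/8⌋) > 2^m · 4/(3√3·m^{3/2})`. -/
theorem p_floor_eta (η : ℝ) (hη : 0 < η) :
    ∃ M : ℕ, ∀ m : ℕ, M ≤ m →
      (2 : ℝ) ^ m * 4 / (3 * Real.sqrt 3 * (m : ℝ) ^ ((3 : ℝ) / 2)) <
        (p ⌊(m : ℝ) ^ 2 * (1 + η) / 8⌋₊ : ℝ) := by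
  obtain ⟨R, hR⟩ := eventually_atTop.mp eventually_mul_eight_pow_mul_cube_lt
  refine ⟨max (3 * R + 3) ⌈16 / η⌉₊, fun m hm => ?_⟩
  set r := m / 3 - 1
  have hmr : 3 * (r + 1) ≤ m ∧ m ≤ 3 * r + 5 ∧ R ≤ r := by omega
  have hηm : 16 ≤ η * m := (div_le_iff₀' hη).mp (Nat.ceil_le.mp (le_of_max_le_right hm))
  have hmr' : 3 * ((r : ℝ) + 1) ≤ m := by exact_mod_cast hmr.1
  have hN : 9 * ((r : ℝ) + 1) ^ 2 / 8 + r ≤ ⌊(m : ℝ) ^ 2 * (1 + η) / 8⌋₊ := by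
    nlinarith [Nat.sub_one_lt_floor ((m : ℝ) ^ 2 * (1 + η) / 8)]
  have hsqrt3 : 4 / 3 ≤ √3 := Real.le_sqrt_of_sq_le (by norm_num)
  have hm1 : (1 : ℝ) ≤ (m : ℝ) ^ ((3 : ℝ) / 2) :=
    Real.one_le_rpow (by exact_mod_cast (by omega : 1 ≤ m)) (by norm_num)
  calc (2 : ℝ) ^ m * 4 / (3 * √3 * (m : ℝ) ^ ((3 : ℝ) / 2)) ≤ 2 ^ m := by
        rw [div_le_iff₀ (by positivity)]; gcongr; nlinarith
    _ ≤ 2 ^ (3 * r + 5) := pow_le_pow_right₀ one_le_two hmr.2.1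
    _ = 32 * 8 ^ r := by rw [pow_add, pow_mul]; norm_num [mul_comm]
    _ < (9 * exp 1 ^ 2 / 8) ^ r / ((r : ℝ) + 1) ^ 3 := by
        rw [lt_div_iff₀ (by positivity)]; exact hR r hmr.2.2
    _ ≤ p ⌊(m : ℝ) ^ 2 * (1 + η) / 8⌋₊ := pow_div_cube_le_p hN
end
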